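/- arXiv:2009.06161 — 6 statements merged into one kernel-verified Lean document; each statement's English description precedes it below -/
import Mathlib

section
/- The function f(x,y) = log₂(1 + 1/(xy)) is convex on the domain {(x,y) : x > 0, y > 0}. -/
/-!
With `s = log x + log y` we have `1 + 1/(xy) = 1 + exp (-s)`, so `f = g ∘ s / log 2` where
`g t = log (1 + exp (-t))`. The function `s` is concave on the open quadrant, and `g` is convex and
antitone (its derivative `-(1 + exp t)⁻¹` is negative and increasing), so `g ∘ s` is convex.
-/

open Real Set

lemma hasDerivAt_log_one_add_exp_neg (t : ℝ) :
    HasDerivAt (fun s => log (1 + exp (-s))) (-(1 + exp t)⁻¹) t := by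
  have h := (((hasDerivAt_neg t).exp).const_add 1).log (by positivity)
  convert h using 1
  rw [exp_neg]
  field_simp
  ring

lemma convexOn_log_one_add_exp_neg : ConvexOn ℝ univ fun t => log (1 + exp (-t)) := by
  refine Monotone.convexOn_univ_of_deriv
    (fun t => (hasDerivAt_log_one_add_exp_neg t).differentiableAt) fun a b hab => ?_
  simp only [(hasDerivAt_log_one_add_exp_neg _).deriv, neg_le_neg_iff]
  gcongr

lemma antitone_log_one_add_exp_neg : Antitone fun t => log (1 + exp (-t)) := fun a b hab => by
  dsimp only
  gcongr

lemma concaveOn_log_fst_add_log_snd :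
    ConcaveOn ℝ {p : ℝ × ℝ | 0 < p.1 ∧ 0 < p.2} fun p => log p.1 + log p.2 := by
  have hlog := strictConcaveOn_log_Ioi.concaveOn
  have hconv : Convex ℝ {p : ℝ × ℝ | 0 < p.1 ∧ 0 < p.2} := (convex_Ioi 0).prod (convex_Ioi 0)
  exact ((hlog.comp_linearMap (LinearMap.fst ℝ ℝ ℝ)).subset (fun p hp => hp.1) hconv).add
    ((hlog.comp_linearMap (LinearMap.snd ℝ ℝ ℝ)).subset (fun p hp => hp.2) hconv)

lemma image_log_fst_add_log_snd :
    (fun p : ℝ × ℝ => log p.1 + log p.2) '' {p | 0 < p.1 ∧ 0 < p.2} = univ :=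
  eq_univ_of_forall fun t => ⟨(exp t, 1), ⟨exp_pos t, one_pos⟩, by simp⟩

/-- The function f(x,y) = log₂(1 + 1/(xy)) is convex on {(x,y) : x > 0, y > 0}. -/
theorem stmt0 :
    ConvexOn ℝ {p : ℝ × ℝ | 0 < p.1 ∧ 0 < p.2}
      (fun p : ℝ × ℝ => Real.logb 2 (1 + 1 / (p.1 * p.2))) := by
  have hconvex := convexOn_log_one_add_exp_neg
  have hanti := antitone_log_one_add_exp_neg.antitoneOn univ
  rw [← image_log_fst_add_log_snd] at hconvex hanti
  have hcomp := hconvex.comp_concaveOn concaveOn_log_fst_add_log_snd hanti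
  refine (hcomp.smul (inv_nonneg.2 (log_nonneg one_le_two))).congr fun p ⟨hx, hy⟩ => ?_
  simp only [Function.comp_apply, smul_eq_mul, logb, ← log_mul hx.ne' hy.ne', exp_neg,
    exp_log (mul_pos hx hy), one_div]
  ring
end

section
/- For all x, y, x_f, y_f > 0, log₂(1 + 1/(xy)) ≥ log₂(1 + 1/(x_f y_f)) − (x − x_f)·log₂(e)/(x_f + x_f² y_f) − (y − y_f)·log₂(e)/(y_f + y_f² x_f). -/
/-- First-order Taylor lower bound of log₂(1 + 1/(xy)) at (x_f, y_f). -/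
theorem stmt1 (x y xf yf : ℝ) (hx : 0 < x) (hy : 0 < y) (hxf : 0 < xf) (hyf : 0 < yf) :
    Real.logb 2 (1 + 1 / (x * y)) ≥
      Real.logb 2 (1 + 1 / (xf * yf))
        - (x - xf) * Real.logb 2 (Real.exp 1) / (xf + xf ^ 2 * yf)
        - (y - yf) * Real.logb 2 (Real.exp 1) / (yf + yf ^ 2 * xf) := by
  have hln2 : (0:ℝ) < Real.log 2 := Real.log_pos (by norm_num)
  set a := x * y with ha'
  set b := xf * yf with hb'
  have hA : 0 < a := mul_pos hx hy
  have hB : 0 < b := mul_pos hxf hyf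
  have hb1 : (0:ℝ) < b + 1 := by linarith
  -- Step 1 : AM-GM key inequality
  have key : Real.log (a+1) - Real.log (b+1) ≥ (b/(b+1)) * (Real.log a - Real.log b) := by
    have w1 : (0:ℝ) ≤ b/(b+1) := by positivity
    have w2 : (0:ℝ) ≤ 1/(b+1) := by positivity
    have hw : b/(b+1) + 1/(b+1) = 1 := by field_simp
    have hr : (0:ℝ) < a / b := by positivity
    have amgm := Real.geom_mean_le_arith_mean2_weighted w1 w2 hr.le zero_le_one hw
    have hrhs : b/(b+1)*(a/b) + 1/(b+1)*1 = (a+1)/(b+1) := by field_simp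
    rw [hrhs, Real.one_rpow, mul_one] at amgm
    have hlog := Real.log_le_log (by positivity) amgm
    rw [Real.log_rpow hr, Real.log_div hA.ne' hB.ne',
      Real.log_div (by linarith) hb1.ne'] at hlog
    linarith
  -- Step 2 : tangent line bounds for log
  have tx : Real.log x - Real.log xf ≤ (x - xf)/xf := by
    have h := Real.log_le_sub_one_of_pos (show (0:ℝ) < x/xf by positivity)
    rw [Real.log_div hx.ne' hxf.ne'] at h
    have : x/xf - 1 = (x - xf)/xf := by field_simp
    linarith [this ▸ h]
  have ty : Real.log y - Real.log yf ≤ (y - yf)/yf := by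
    have h := Real.log_le_sub_one_of_pos (show (0:ℝ) < y/yf by positivity)
    rw [Real.log_div hy.ne' hyf.ne'] at h
    have : y/yf - 1 = (y - yf)/yf := by field_simp
    linarith [this ▸ h]
  -- Combine in natural log form
  have hla : Real.log a = Real.log x + Real.log y := Real.log_mul hx.ne' hy.ne'
  have hlb : Real.log b = Real.log xf + Real.log yf := Real.log_mul hxf.ne' hyf.ne'
  have main : Real.log (1 + 1/a) ≥ Real.log (1 + 1/b)
      - (x - xf)/(xf + xf^2 * yf) - (y - yf)/(yf + yf^2 * xf) := by
    have e1 : Real.log (1 + 1/a) = Real.log (a+1) - Real.log a := by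
      rw [show (1:ℝ) + 1/a = (a+1)/a by field_simp,
        Real.log_div (by linarith) hA.ne']
    have e2 : Real.log (1 + 1/b) = Real.log (b+1) - Real.log b := by
      rw [show (1:ℝ) + 1/b = (b+1)/b by field_simp,
        Real.log_div (by linarith) hB.ne']
    have step : Real.log (1 + 1/a) - Real.log (1 + 1/b)
        ≥ -(Real.log a - Real.log b)/(b+1) := by
      rw [e1, e2]
      have : (b/(b+1)) * (Real.log a - Real.log b) - (Real.log a - Real.log b)
          = -(Real.log a - Real.log b)/(b+1) := by field_simp; ring
      linarith [key, this]
    have hs : Real.log a - Real.log b ≤ (x - xf)/xf + (y - yf)/yf := by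
      rw [hla, hlb]; linarith
    have hd : -((x - xf)/xf + (y - yf)/yf)/(b+1) ≤ -(Real.log a - Real.log b)/(b+1) := by
      gcongr
    have heq : -((x - xf)/xf + (y - yf)/yf)/(b+1)
        = -((x - xf)/(xf + xf^2 * yf)) - (y - yf)/(yf + yf^2 * xf) := by
      rw [hb']
      field_simp
      ring
    linarith [step, hd, heq ▸ hd]
  -- Convert to logb 2
  have hD1 : (0:ℝ) < xf + xf^2 * yf := by positivity
  have hD2 : (0:ℝ) < yf + yf^2 * xf := by positivity
  rw [ge_iff_le, Real.logb, Real.logb, Real.logb, Real.log_exp,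
    show Real.log (1 + 1/(xf*yf)) / Real.log 2
        - (x - xf) * (1 / Real.log 2) / (xf + xf^2 * yf)
        - (y - yf) * (1 / Real.log 2) / (yf + yf^2 * xf)
      = (Real.log (1 + 1/b) - (x - xf)/(xf + xf^2 * yf)
          - (y - yf)/(yf + yf^2 * xf)) / Real.log 2 from by
      rw [hb']; field_simp]
  exact (div_le_div_iff_of_pos_right hln2).mpr main
end

section
/- With F(λ) = max_{x∈X}(a(x) − λ b(x)) over nonempty compact X, b > 0: λ* = max_{x∈X} a(x)/b(x) if and only if F(λ*) = 0. -/
/-- Dinkelbach's fundamental theorem: λ* = max_{x∈X} a(x)/b(x) iff F(λ*) = 0, where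
F(λ) = max_{x∈X}(a(x) − λ b(x)), X nonempty compact, a, b continuous, b > 0 on X. -/
theorem stmt6 {E : Type*} [TopologicalSpace E] (X : Set E) (a b : E → ℝ) (lamStar : ℝ)
    (hX : IsCompact X) (hne : X.Nonempty)
    (ha : ContinuousOn a X) (hb : ContinuousOn b X) (hbpos : ∀ x ∈ X, 0 < b x) :
    lamStar = sSup ((fun x => a x / b x) '' X) ↔
      sSup ((fun x => a x - lamStar * b x) '' X) = 0 := by
  have hr : ContinuousOn (fun x => a x / b x) X :=
    ha.div hb fun x hx => (hbpos x hx).ne'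
  have hg : ContinuousOn (fun x => a x - lamStar * b x) X :=
    ha.sub (continuousOn_const.mul hb)
  obtain ⟨x0, hx0, hsup0, hmax0⟩ := hX.exists_sSup_image_eq_and_ge hne hr
  obtain ⟨x1, hx1, hsup1, hmax1⟩ := hX.exists_sSup_image_eq_and_ge hne hg
  constructor
  · intro h
    rw [hsup1]
    have hle : ∀ x ∈ X, a x - lamStar * b x ≤ 0 := by
      intro x hx
      have h1 : a x / b x ≤ lamStar := by
        rw [h, hsup0]; exact hmax0 x hx
      have := (div_le_iff₀ (hbpos x hx)).mp h1
      linarith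
    have h0 : a x0 - lamStar * b x0 = 0 := by
      have hb0 := hbpos x0 hx0
      have : a x0 / b x0 = lamStar := by rw [h, hsup0]
      have := (div_eq_iff hb0.ne').mp this
      linarith
    have h2 : (0 : ℝ) ≤ a x1 - lamStar * b x1 := h0 ▸ hmax1 x0 hx0
    exact le_antisymm (hle x1 hx1) h2
  · intro h
    rw [hsup0]
    rw [hsup1] at h
    have hle : ∀ x ∈ X, a x / b x ≤ lamStar := by
      intro x hx
      have h1 : a x - lamStar * b x ≤ 0 := h ▸ hmax1 x hx
      exact (div_le_iff₀ (hbpos x hx)).mpr (by linarith)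
    have heq : a x1 / b x1 = lamStar := by
      have hb1 := hbpos x1 hx1
      rw [div_eq_iff hb1.ne']
      linarith
    exact le_antisymm (heq ▸ hmax0 x1 hx1 : lamStar ≤ _) (hle x0 hx0)
end

section
/- If F(λ) = max_{x∈X}(a(x) − λ b(x)) = 0 is attained at x*, then x* maximizes the ratio a(x)/b(x) over X. -/
/-- If F(λ*) = max_{x∈X}(a(x) − λ* b(x)) = 0 is attained at x*, then x* maximizes a/b over X. -/
theorem stmt7 {n : ℕ} (X : Set (EuclideanSpace ℝ (Fin n))) (a b : EuclideanSpace ℝ (Fin n) → ℝ)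
    (lamStar : ℝ) (xStar : EuclideanSpace ℝ (Fin n))
    (hX : IsCompact X) (hne : X.Nonempty)
    (ha : ContinuousOn a X) (hb : ContinuousOn b X) (hbpos : ∀ x ∈ X, 0 < b x)
    (hxStar : xStar ∈ X)
    (hmax : ∀ x ∈ X, a x - lamStar * b x ≤ a xStar - lamStar * b xStar)
    (hzero : a xStar - lamStar * b xStar = 0) :
    ∀ x ∈ X, a x / b x ≤ a xStar / b xStar := by
  intro x hx
  have hbx := hbpos x hx
  have hbs := hbpos xStar hxStar
  have h1 : a x - lamStar * b x ≤ 0 := (hmax x hx).trans_eq hzero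
  have hs : a xStar / b xStar = lamStar := by
    field_simp
    linarith
  rw [hs, div_le_iff₀ hbx]
  linarith
end

section
/- In Dinkelbach's iteration with λ_{k+1} = a(x_k)/b(x_k) where x_k attains F(λ_k) > 0, the sequence (λ_k) is strictly increasing and bounded above by λ* = max a/b, hence convergent. -/
/-- In Dinkelbach's iteration with λ_{k+1} = a(x_k)/b(x_k), where x_k attains F(λ_k) > 0,
the sequence (λ_k) is strictly increasing, bounded above by λ* = max a/b, hence convergent. -/
theorem stmt8 {E : Type*} [TopologicalSpace E] (X : Set E) (a b : E → ℝ)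
    (hX : IsCompact X) (hne : X.Nonempty)
    (ha : ContinuousOn a X) (hb : ContinuousOn b X) (hbpos : ∀ x ∈ X, 0 < b x)
    (lam : ℕ → ℝ) (x : ℕ → E)
    (hxmem : ∀ k, x k ∈ X)
    (hattain : ∀ k, ∀ z ∈ X, a z - lam k * b z ≤ a (x k) - lam k * b (x k))
    (hFpos : ∀ k, 0 < a (x k) - lam k * b (x k))
    (hupdate : ∀ k, lam (k + 1) = a (x k) / b (x k)) :
    StrictMono lam ∧
      (∀ k, lam k ≤ sSup ((fun z => a z / b z) '' X)) ∧
      ∃ L, Filter.Tendsto lam Filter.atTop (nhds L) := by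
  have hstep : ∀ k, lam k < lam (k + 1) := by
    intro k
    rw [hupdate k]
    rw [lt_div_iff₀ (hbpos _ (hxmem k))]
    linarith [hFpos k]
  have hmono : StrictMono lam := strictMono_nat_of_lt_succ hstep
  -- the image is compact, hence bounded above
  have hcont : ContinuousOn (fun z => a z / b z) X :=
    ha.div hb (fun z hz => (hbpos z hz).ne')
  have hcomp : IsCompact ((fun z => a z / b z) '' X) := hX.image_of_continuousOn hcont
  have hbdd : BddAbove ((fun z => a z / b z) '' X) := hcomp.bddAbove
  have hub : ∀ k, lam k ≤ sSup ((fun z => a z / b z) '' X) := by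
    intro k
    have h1 : lam k < a (x k) / b (x k) := hupdate k ▸ hstep k
    have h2 : a (x k) / b (x k) ≤ sSup ((fun z => a z / b z) '' X) :=
      le_csSup hbdd ⟨x k, hxmem k, rfl⟩
    linarith
  refine ⟨hmono, hub, ?_⟩
  have hbddr : BddAbove (Set.range lam) := by
    refine ⟨sSup ((fun z => a z / b z) '' X), ?_⟩
    rintro _ ⟨k, rfl⟩
    exact hub k
  exact ⟨_, tendsto_atTop_ciSup hmono.monotone hbddr⟩
end

section
/- The function (v, a, τ) ↦ c₁‖v‖³ + (c₂/τ)(1 + ‖a‖²/g²) is jointly convex on ℝ² × ℝ² × (0, ∞), given constants c₁, c₂, g > 0. -/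
/-!
The three summands `c₁‖v‖³`, `c₂/τ` and `(c₂/g²)·‖a‖²/τ` are each convex. The first is a power of
the convex, nonnegative norm; the second is `τ⁻¹` on `(0, ∞)`; the third is the
quadratic-over-linear function `(x, τ) ↦ ‖x‖²/τ`, which is convex because
`(a s + b t)(a x²/s + b y²/t) - (a x + b y)² = a b (t x - s y)² / (s t) ≥ 0`.
-/

open Set

lemma add_sq_div_add_le {a b s t : ℝ} (x y : ℝ) (ha : 0 ≤ a) (hb : 0 ≤ b) (hs : 0 < s)
    (ht : 0 < t) (hd : 0 < a * s + b * t) :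
    (a * x + b * y) ^ 2 / (a * s + b * t) ≤ a * (x ^ 2 / s) + b * (y ^ 2 / t) := by
  have hrhs : a * (x ^ 2 / s) + b * (y ^ 2 / t) = (a * x ^ 2 * t + b * y ^ 2 * s) / (s * t) := by
    field_simp
  rw [hrhs, div_le_div_iff₀ hd (mul_pos hs ht)]
  nlinarith [mul_nonneg (mul_nonneg ha hb) (sq_nonneg (x * t - y * s))]

lemma convexOn_norm_sq_div {E : Type*} [SeminormedAddCommGroup E] [NormedSpace ℝ E] :
    ConvexOn ℝ ((univ : Set E) ×ˢ Ioi (0 : ℝ)) (fun q : E × ℝ => ‖q.1‖ ^ 2 / q.2) := by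
  refine ⟨convex_univ.prod (convex_Ioi 0), ?_⟩
  rintro ⟨u, s⟩ ⟨-, hs : 0 < s⟩ ⟨w, t⟩ ⟨-, ht : 0 < t⟩ a b ha hb hab
  have hd : 0 < a * s + b * t := by
    rcases ha.eq_or_lt with rfl | ha'
    · simpa [show b = 1 by linarith] using ht
    · positivity
  have hnorm : ‖a • u + b • w‖ ≤ a * ‖u‖ + b * ‖w‖ :=
    calc ‖a • u + b • w‖ ≤ ‖a • u‖ + ‖b • w‖ := norm_add_le _ _
      _ = a * ‖u‖ + b * ‖w‖ := by
        rw [norm_smul, norm_smul, Real.norm_of_nonneg ha, Real.norm_of_nonneg hb]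
  calc ‖a • u + b • w‖ ^ 2 / (a * s + b * t)
      ≤ (a * ‖u‖ + b * ‖w‖) ^ 2 / (a * s + b * t) := by gcongr
    _ ≤ a * (‖u‖ ^ 2 / s) + b * (‖w‖ ^ 2 / t) := add_sq_div_add_le _ _ ha hb hs ht hd

theorem stmt12_general (c₁ c₂ g : ℝ) (hc₁ : 0 < c₁) (hc₂ : 0 < c₂) :
    ConvexOn ℝ
      ((Set.univ : Set (EuclideanSpace ℝ (Fin 2))) ×ˢ
        (Set.univ : Set (EuclideanSpace ℝ (Fin 2))) ×ˢ Set.Ioi (0 : ℝ))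
      (fun p : EuclideanSpace ℝ (Fin 2) × EuclideanSpace ℝ (Fin 2) × ℝ =>
        c₁ * ‖p.1‖ ^ 3 + (c₂ / p.2.2) * (1 + ‖p.2.1‖ ^ 2 / g ^ 2)) := by
  set E := EuclideanSpace ℝ (Fin 2)
  set S := (univ : Set E) ×ˢ (univ : Set E) ×ˢ Ioi (0 : ℝ)
  have hS : Convex ℝ S := convex_univ.prod (convex_univ.prod (convex_Ioi 0))
  have hcube : ConvexOn ℝ S (fun p : E × E × ℝ => c₁ * ‖p.1‖ ^ 3) :=
    ((((convexOn_norm convex_univ).pow (fun _ _ => norm_nonneg _) 3).smul hc₁.le).comp_linearMap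
      (LinearMap.fst ℝ E (E × ℝ))).subset (subset_univ S) hS
  have hinv : ConvexOn ℝ S (fun p : E × E × ℝ => c₂ * p.2.2⁻¹) := by
    have hzpow : ConvexOn ℝ (Ioi (0 : ℝ)) (fun τ : ℝ => τ⁻¹) := by
      simpa using convexOn_zpow (𝕜 := ℝ) (-1)
    exact ((hzpow.smul hc₂.le).comp_linearMap
      ((LinearMap.snd ℝ E ℝ).comp (LinearMap.snd ℝ E (E × ℝ)))).subset
      (fun p hp => hp.2.2) hS
  have hquad : ConvexOn ℝ S (fun p : E × E × ℝ => c₂ / g ^ 2 * (‖p.2.1‖ ^ 2 / p.2.2)) :=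
    (((convexOn_norm_sq_div (E := E)).smul (by positivity : 0 ≤ c₂ / g ^ 2)).comp_linearMap
      (LinearMap.snd ℝ E (E × ℝ))).subset (fun p hp => hp.2) hS
  refine ((hcube.add hinv).add hquad).congr ?_
  rintro ⟨v, a, τ⟩ ⟨-, -, hτ : 0 < τ⟩
  simp only [Pi.add_apply]
  field_simp
  ring

/-- (v, a, τ) ↦ c₁‖v‖³ + (c₂/τ)(1 + ‖a‖²/g²) is jointly convex on ℝ² × ℝ² × (0,∞). -/
theorem stmt12 (c₁ c₂ g : ℝ) (hc₁ : 0 < c₁) (hc₂ : 0 < c₂) (hg : 0 < g) :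
    ConvexOn ℝ
      ((Set.univ : Set (EuclideanSpace ℝ (Fin 2))) ×ˢ
        (Set.univ : Set (EuclideanSpace ℝ (Fin 2))) ×ˢ Set.Ioi (0 : ℝ))
      (fun p : EuclideanSpace ℝ (Fin 2) × EuclideanSpace ℝ (Fin 2) × ℝ =>
        c₁ * ‖p.1‖ ^ 3 + (c₂ / p.2.2) * (1 + ‖p.2.1‖ ^ 2 / g ^ 2)) :=
  stmt12_general c₁ c₂ g hc₁ hc₂
end
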